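/- For every partition λ of d ≥ 2 with λ ≠ (d), one has κ_λ ≤ (d−1)(d−2) − 2. In particular, there is no partition λ of d with (d−1)(d−2) < κ_λ < d(d−1). -/

import Mathlib

/-- `κ_λ = Σ_i λ_i (λ_i - 2 i + 1)` for a partition given as a list (1-indexed rows). -/
def kappa (l : List ℤ) : ℤ :=
  ∑ i : Fin l.length, l.get i * (l.get i - 2 * ((i.val : ℤ) + 1) + 1)

/-- A list of integers represents a partition if it is weakly decreasing and all parts
are positive. -/
def IsPartition (l : List ℤ) : Prop :=
  l.Pairwise (· ≥ ·) ∧ ∀ x ∈ l, 0 < x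

/-!
Split off the first row: with `|t| = Σ t`, `κ (a :: t) = a (a - 1) + κ t - 2 |t|`, because moving
every row of `t` one step down lowers its contribution by twice its length. Induction then gives
the crude bound `κ t ≤ |t| (|t| - 1)` (attained by one-row partitions), and for `λ = a :: t`
with `|t| ≥ 1` this yields
`κ λ ≤ a (a - 1) + |t| (|t| - 3) = (d - 1)(d - 2) - 2 - 2a (|t| - 1)`.
-/

@[simp]
theorem kappa_nil : kappa [] = 0 := by
  simp [kappa]

theorem kappa_cons (a : ℤ) (t : List ℤ) :
    kappa (a :: t) = a * (a - 1) + kappa t - 2 * t.sum := by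
  rw [← Fin.sum_univ_getElem t]
  simp only [kappa, List.length_cons, Fin.sum_univ_succ, List.get_eq_getElem, Fin.val_zero,
    Fin.val_succ, List.getElem_cons_zero, List.getElem_cons_succ, Finset.mul_sum]
  push_cast
  rw [add_sub_assoc, ← Finset.sum_sub_distrib]
  congr 1
  · ring
  · exact Finset.sum_congr rfl fun i _ => by ring

@[simp]
theorem kappa_singleton (a : ℤ) : kappa [a] = a * (a - 1) := by
  simp [kappa_cons]

theorem kappa_le_sum_mul_sum_sub_one {l : List ℤ} (hl : ∀ x ∈ l, 0 ≤ x) :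
    kappa l ≤ l.sum * (l.sum - 1) := by
  induction l with
  | nil => simp
  | cons a t ih =>
    have ha : 0 ≤ a := hl a List.mem_cons_self
    have ht : ∀ x ∈ t, 0 ≤ x := fun x hx => hl x (List.mem_cons_of_mem a hx)
    have hT : 0 ≤ t.sum := List.sum_nonneg ht
    rw [kappa_cons, List.sum_cons]
    nlinarith [ih ht]

theorem kappa_le_of_ne_singleton {l : List ℤ} (hl : ∀ x ∈ l, 0 < x) (hne : l ≠ [l.sum]) :
    kappa l ≤ (l.sum - 1) * (l.sum - 2) - 2 := by
  cases l with
  | nil => simp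
  | cons a t =>
    have ht : t ≠ [] := by rintro rfl; simp at hne
    have ha : 0 < a := hl a List.mem_cons_self
    have hpos : ∀ x ∈ t, 0 < x := fun x hx => hl x (List.mem_cons_of_mem a hx)
    have hT : 0 < t.sum := List.sum_pos t hpos ht
    have hκ := kappa_le_sum_mul_sum_sub_one fun x hx => (hpos x hx).le
    rw [kappa_cons, List.sum_cons]
    nlinarith

theorem kappa_gap_general (d : ℕ) :
    (∀ l : List ℤ, IsPartition l → l.sum = (d : ℤ) → l ≠ [(d : ℤ)] →
        kappa l ≤ ((d : ℤ) - 1) * ((d : ℤ) - 2) - 2) ∧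
    (∀ l : List ℤ, IsPartition l → l.sum = (d : ℤ) →
        ¬(((d : ℤ) - 1) * ((d : ℤ) - 2) < kappa l ∧ kappa l < (d : ℤ) * ((d : ℤ) - 1))) := by
  have hbound : ∀ l : List ℤ, IsPartition l → l.sum = (d : ℤ) → l ≠ [(d : ℤ)] →
      kappa l ≤ ((d : ℤ) - 1) * ((d : ℤ) - 2) - 2 := by
    rintro l ⟨-, hpos⟩ hsum hne
    rw [← hsum] at hne ⊢
    exact kappa_le_of_ne_singleton hpos hne
  refine ⟨hbound, fun l hl hsum ⟨hlow, hhigh⟩ => ?_⟩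
  by_cases hrow : l = [(d : ℤ)]
  · subst hrow
    simp at hhigh
  · linarith [hbound l hl hsum hrow]

/-- For every partition `λ` of `d ≥ 2` with `λ ≠ (d)`, `κ_λ ≤ (d-1)(d-2) - 2`; in
particular no partition of `d` has `(d-1)(d-2) < κ_λ < d(d-1)`. -/
theorem kappa_gap (d : ℕ) (hd : 2 ≤ d) :
    (∀ l : List ℤ, IsPartition l → l.sum = (d : ℤ) → l ≠ [(d : ℤ)] →
        kappa l ≤ ((d : ℤ) - 1) * ((d : ℤ) - 2) - 2) ∧
    (∀ l : List ℤ, IsPartition l → l.sum = (d : ℤ) →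
        ¬(((d : ℤ) - 1) * ((d : ℤ) - 2) < kappa l ∧ kappa l < (d : ℤ) * ((d : ℤ) - 1))) :=
  kappa_gap_general d
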